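/- arXiv:1710.05411 — 2 statements merged into one kernel-verified Lean document; each statement's English description precedes it below -/
import Mathlib

section
/- The function θ ↦ ν(θ) is differentiable on (0,π/2), ĝ″(ν(θ)) < 0 there, and ν′(θ) = sec²θ / (−ĝ″(ν(θ))); in particular ν is strictly increasing on (0,π/2). -/
/-!
Since `cosh ĝ = A - B cosh ν` with `ĝ ≥ 0`, `ĝ = arcosh (A - B cosh ν)`, and the saddle-point
equation says `tan θ = -ĝ'(ν(θ))`, where `-ĝ' = B sinh ν / sinh ĝ`. Differentiating once more,
`-ĝ'' = (B cosh ν + cosh ĝ · ĝ'²) / sinh ĝ > 0`, so `-ĝ'` is strictly increasing,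
`ν = (-ĝ')⁻¹ ∘ tan`, and the inverse function theorem gives `ν' = sec² θ / (-ĝ''(ν))`.
-/

open Real Set Filter Topology

theorem HasDerivAt.arcosh {f : ℝ → ℝ} {f' x : ℝ} (hf : HasDerivAt f f' x) (hx : 1 < f x) :
    HasDerivAt (fun y => Real.arcosh (f y)) (f' / Real.sinh (Real.arcosh (f x))) x := by
  rw [sinh_arcosh hx.le, div_eq_inv_mul]
  exact (hasDerivAt_arcosh hx).comp x hf

/-- The paper's `ĝ`, extended beyond `[0, ν₀]`. -/
noncomputable def ghat (A B ν : ℝ) : ℝ := arcosh (A - B * cosh ν)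

/-- `-ĝ'`. -/
noncomputable def ghatSlope (A B ν : ℝ) : ℝ := B * sinh ν / sinh (ghat A B ν)

section ghat

variable {A B ν : ℝ}

theorem one_lt_sub_mul_cosh {ν₀ : ℝ} (hB : 0 < B) (hν₀ : cosh ν₀ = (A - 1) / B)
    (hν : ν ∈ Ico 0 ν₀) : 1 < A - B * cosh ν := by
  have h := cosh_lt_cosh.2 (show |ν| < |ν₀| by
    rw [abs_of_nonneg hν.1, abs_of_nonneg (hν.1.trans hν.2.le)]; exact hν.2)
  rw [hν₀, lt_div_iff₀ hB] at h
  linarith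

theorem sinh_ghat_pos (h : 1 < A - B * cosh ν) : 0 < sinh (ghat A B ν) :=
  sinh_pos_iff.2 (arcosh_pos h)

theorem ghatSlope_pos (hB : 0 < B) (hν : 0 < ν) (h : 1 < A - B * cosh ν) :
    0 < ghatSlope A B ν :=
  div_pos (mul_pos hB (sinh_pos_iff.2 hν)) (sinh_ghat_pos h)

theorem hasDerivAt_ghat (h : 1 < A - B * cosh ν) :
    HasDerivAt (ghat A B) (-ghatSlope A B ν) ν := by
  have := HasDerivAt.arcosh (((hasDerivAt_cosh ν).const_mul B).const_sub A) h
  rwa [neg_div] at this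

theorem hasDerivAt_ghatSlope (h : 1 < A - B * cosh ν) :
    HasDerivAt (ghatSlope A B)
      ((B * cosh ν + cosh (ghat A B ν) * ghatSlope A B ν ^ 2) / sinh (ghat A B ν)) ν := by
  have hS := (sinh_ghat_pos h).ne'
  refine (((hasDerivAt_sinh ν).const_mul B).div (hasDerivAt_ghat h).sinh hS).congr_deriv ?_
  simp only [ghatSlope]
  field_simp
  ring

theorem deriv_ghatSlope_pos (hB : 0 < B) (h : 1 < A - B * cosh ν) :
    0 < deriv (ghatSlope A B) ν := by
  rw [(hasDerivAt_ghatSlope h).deriv]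
  have := sinh_ghat_pos h
  positivity

theorem strictMonoOn_ghatSlope {s : Set ℝ} (hs : Convex ℝ s) (hB : 0 < B)
    (h : ∀ ν ∈ s, 1 < A - B * cosh ν) : StrictMonoOn (ghatSlope A B) s :=
  strictMonoOn_of_deriv_pos hs
    (fun ν hν => (hasDerivAt_ghatSlope (h ν hν)).continuousAt.continuousWithinAt)
    (fun ν hν => deriv_ghatSlope_pos hB (h ν (interior_subset hν)))

end ghat

theorem hasDerivAt_of_tan_eq_comp {f φ : ℝ → ℝ} {f' θ : ℝ} (hθ : θ ∈ Ioo (-(π / 2)) (π / 2))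
    (hφ : ContinuousAt φ θ) (hf : HasDerivAt f f' (φ θ)) (hf' : f' ≠ 0)
    (heq : ∀ᶠ t in 𝓝 θ, tan t = f (φ t)) : HasDerivAt φ ((1 / cos θ) ^ 2 / f') θ := by
  have hcos : cos θ ≠ 0 := (cos_pos_of_mem_Ioo hθ).ne'
  have hinv : ∀ᶠ t in 𝓝 θ, arctan (f (φ t)) = t := by
    filter_upwards [heq, isOpen_Ioo.mem_nhds hθ] with t ht htmem
    rw [← ht, arctan_tan htmem.1 htmem.2]
  have hne : 1 / (1 + f (φ θ) ^ 2) * f' ≠ 0 := mul_ne_zero (by positivity) hf'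
  refine (hf.arctan.of_local_left_inverse hφ hne hinv).congr_deriv ?_
  rw [← heq.self_of_nhds, one_div (1 + _), inv_one_add_tan_sq hcos]
  field_simp

section SaddlePoint

variable {A B ν₀ : ℝ} {nu : ℝ → ℝ} (hB : 0 < B) (hν₀ : cosh ν₀ = (A - 1) / B)
include hB hν₀

theorem strictMonoOn_ghatSlope_Ioo : StrictMonoOn (ghatSlope A B) (Ioo 0 ν₀) :=
  strictMonoOn_ghatSlope (convex_Ioo 0 ν₀) hB
    fun _ hν => one_lt_sub_mul_cosh hB hν₀ (Ioo_subset_Ico_self hν)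

theorem deriv_deriv_eq_neg_deriv_ghatSlope {g : ℝ → ℝ} {ν : ℝ}
    (hg : EqOn g (ghat A B) (Icc 0 ν₀)) (hν : ν ∈ Ioo 0 ν₀) :
    deriv (deriv g) ν = -deriv (ghatSlope A B) ν := by
  have hderiv : deriv g =ᶠ[𝓝 ν] -ghatSlope A B := by
    filter_upwards [isOpen_Ioo.mem_nhds hν] with x hx
    rw [(hg.eventuallyEq_of_mem (Icc_mem_nhds hx.1 hx.2)).deriv_eq]
    exact (hasDerivAt_ghat (one_lt_sub_mul_cosh hB hν₀ (Ioo_subset_Ico_self hx))).deriv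
  rw [hderiv.deriv_eq, deriv.neg]

theorem mem_Ioo_and_tan_eq_ghatSlope {g : ℝ → ℝ} {θ : ℝ} (hg : EqOn g (ghat A B) (Icc 0 ν₀))
    (hnu : ∀ θ ∈ Ico (0 : ℝ) (π / 2),
      nu θ ∈ Ico (0 : ℝ) ν₀ ∧ B * sinh (nu θ) = tan θ * sinh (g (nu θ)))
    (hθ : θ ∈ Ioo 0 (π / 2)) :
    nu θ ∈ Ioo 0 ν₀ ∧ tan θ = ghatSlope A B (nu θ) := by
  obtain ⟨hmem, heq⟩ := hnu θ (Ioo_subset_Ico_self hθ)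
  rw [hg (Ico_subset_Icc_self hmem)] at heq
  have hS := sinh_ghat_pos (one_lt_sub_mul_cosh hB hν₀ hmem)
  have htan := tan_pos_of_pos_of_lt_pi_div_two hθ.1 hθ.2
  have hne : nu θ ≠ 0 := by
    intro h0
    rw [h0, sinh_zero, mul_zero] at heq
    exact (mul_pos htan (h0 ▸ hS)).ne heq
  refine ⟨⟨lt_of_le_of_ne hmem.1 hne.symm, hmem.2⟩, ?_⟩
  rw [ghatSlope, eq_div_iff hS.ne', heq]

variable (hnu : ∀ θ ∈ Ioo 0 (π / 2), nu θ ∈ Ioo 0 ν₀ ∧ tan θ = ghatSlope A B (nu θ))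
include hnu

theorem strictMonoOn_nu : StrictMonoOn nu (Ioo 0 (π / 2)) := by
  intro θ₁ h₁ θ₂ h₂ hlt
  rw [← (strictMonoOn_ghatSlope_Ioo hB hν₀).lt_iff_lt (hnu θ₁ h₁).1 (hnu θ₂ h₂).1,
    ← (hnu θ₁ h₁).2, ← (hnu θ₂ h₂).2]
  exact strictMonoOn_tan ⟨by linarith [h₁.1, pi_pos], h₁.2⟩ ⟨by linarith [h₂.1, pi_pos], h₂.2⟩ hlt

theorem Ioo_subset_image_nu : Ioo 0 ν₀ ⊆ nu '' Ioo 0 (π / 2) := by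
  intro ν hν
  have hc := one_lt_sub_mul_cosh hB hν₀ (Ioo_subset_Ico_self hν)
  have hθ : arctan (ghatSlope A B ν) ∈ Ioo 0 (π / 2) :=
    ⟨arctan_pos.2 (ghatSlope_pos hB hν.1 hc), arctan_lt_pi_div_two _⟩
  refine ⟨_, hθ, (strictMonoOn_ghatSlope_Ioo hB hν₀).injOn (hnu _ hθ).1 hν ?_⟩
  rw [← (hnu _ hθ).2, tan_arctan]

theorem continuousAt_nu {θ : ℝ} (hθ : θ ∈ Ioo 0 (π / 2)) : ContinuousAt nu θ :=
  continuousAt_of_monotoneOn_of_image_mem_nhds (strictMonoOn_nu hB hν₀ hnu).monotoneOn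
    (isOpen_Ioo.mem_nhds hθ)
    (mem_of_superset (isOpen_Ioo.mem_nhds (hnu θ hθ).1) (Ioo_subset_image_nu hB hν₀ hnu))

theorem hasDerivAt_nu {θ : ℝ} (hθ : θ ∈ Ioo 0 (π / 2)) :
    HasDerivAt nu ((1 / cos θ) ^ 2 / deriv (ghatSlope A B) (nu θ)) θ := by
  have hc := one_lt_sub_mul_cosh hB hν₀ (Ioo_subset_Ico_self (hnu θ hθ).1)
  refine hasDerivAt_of_tan_eq_comp ⟨by linarith [hθ.1, pi_pos], hθ.2⟩
    (continuousAt_nu hB hν₀ hnu hθ) (hasDerivAt_ghatSlope hc).differentiableAt.hasDerivAt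
    (deriv_ghatSlope_pos hB hc).ne' ?_
  filter_upwards [isOpen_Ioo.mem_nhds hθ] with t ht using (hnu t ht).2

end SaddlePoint

theorem statement4_general
    (K2 K1s : ℝ)
    (hK1s : 0 < K1s)
    (hlow : K1s < K2)
    (A B : ℝ)
    (hB : B = Real.sinh (2 * K1s) * Real.sinh (2 * K2))
    (ν₀ : ℝ)
    (hν₀ : Real.cosh ν₀ = (A - 1) / B)
    (g : ℝ → ℝ)
    (hg : ∀ ν ∈ Set.Icc (0 : ℝ) ν₀,
      0 ≤ g ν ∧ Real.cosh (g ν) = A - B * Real.cosh ν)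
    (nu : ℝ → ℝ)
    (hnu : ∀ θ ∈ Set.Ico (0 : ℝ) (π / 2),
      nu θ ∈ Set.Ico (0 : ℝ) ν₀ ∧
      B * Real.sinh (nu θ) = Real.tan θ * Real.sinh (g (nu θ))) :
    (∀ θ ∈ Set.Ioo (0 : ℝ) (π / 2),
      deriv (deriv g) (nu θ) < 0 ∧
      HasDerivAt nu ((1 / Real.cos θ) ^ 2 / (-(deriv (deriv g) (nu θ)))) θ) ∧
    StrictMonoOn nu (Set.Ioo 0 (π / 2)) := by
  have hB0 : 0 < B := hB ▸ mul_pos (sinh_pos_iff.2 (by linarith)) (sinh_pos_iff.2 (by linarith))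
  have hg' : EqOn g (ghat A B) (Icc 0 ν₀) := fun ν hν => by
    rw [ghat, ← (hg ν hν).2, arcosh_cosh (hg ν hν).1]
  have hsaddle := fun θ (hθ : θ ∈ Ioo 0 (π / 2)) =>
    mem_Ioo_and_tan_eq_ghatSlope hB0 hν₀ hg' hnu hθ
  refine ⟨fun θ hθ => ?_, strictMonoOn_nu hB0 hν₀ hsaddle⟩
  have hc := one_lt_sub_mul_cosh hB0 hν₀ (Ioo_subset_Ico_self (hsaddle θ hθ).1)
  rw [deriv_deriv_eq_neg_deriv_ghatSlope hB0 hν₀ hg' (hsaddle θ hθ).1, neg_neg]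
  exact ⟨neg_neg_iff_pos.2 (deriv_ghatSlope_pos hB0 hc), hasDerivAt_nu hB0 hν₀ hsaddle hθ⟩

/-- The function `θ ↦ ν(θ)` is differentiable on `(0, π/2)`,
`ĝ″(ν(θ)) < 0` there, and `ν′(θ) = sec²θ / (−ĝ″(ν(θ)))`; in particular `ν` is
strictly increasing on `(0, π/2)`. -/
theorem statement4
    (K1 K2 K1s : ℝ)
    (hK1 : 0 < K1) (hK2 : 0 < K2) (hK1s : 0 < K1s)
    (hdual : Real.exp (2 * K1s) = Real.cosh K1 / Real.sinh K1)
    (hlow : K1s < K2)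
    (A B : ℝ)
    (hA : A = Real.cosh (2 * K1s) * Real.cosh (2 * K2))
    (hB : B = Real.sinh (2 * K1s) * Real.sinh (2 * K2))
    (ν₀ : ℝ) (hν₀pos : 0 < ν₀)
    (hν₀ : Real.cosh ν₀ = (A - 1) / B)
    (g : ℝ → ℝ)
    (hg : ∀ ν ∈ Set.Icc (0 : ℝ) ν₀,
      0 ≤ g ν ∧ Real.cosh (g ν) = A - B * Real.cosh ν)
    (nu : ℝ → ℝ)
    (hnu : ∀ θ ∈ Set.Ico (0 : ℝ) (π / 2),
      nu θ ∈ Set.Ico (0 : ℝ) ν₀ ∧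
      B * Real.sinh (nu θ) = Real.tan θ * Real.sinh (g (nu θ))) :
    (∀ θ ∈ Set.Ioo (0 : ℝ) (π / 2),
      deriv (deriv g) (nu θ) < 0 ∧
      HasDerivAt nu ((1 / Real.cos θ) ^ 2 / (-(deriv (deriv g) (nu θ)))) θ) ∧
    StrictMonoOn nu (Set.Ioo 0 (π / 2)) :=
  statement4_general K2 K1s hK1s hlow A B hB ν₀ hν₀ g hg nu hnu
end

section
/- Fix nonnegative integers m and n, and let (a_N), (b_N), (b̄_N) be sequences of natural numbers with a_N → ∞, b_N/a_N → t and b̄_N/a_N → t for the same real t ∈ (0,∞) (eventually b_N ≥ n and b̄_N ≥ n). Then the cross-ratio [C(a_N + b_N − m − n, b_N − n)/C(a_N + b_N, b_N)] · [C(a_N + b̄_N, b̄_N)/C(a_N + b̄_N − m − n, b̄_N − n)] converges to 1 as N → ∞. -/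
/-!
In falling factorials, `C(a+b-m-n, b-n) / C(a+b, b) = b^(n) a^(m) / (a+b)^(m+n)`, which is
asymptotic to `b^n a^m / (a+b)^(m+n) = (b/a)^n / (1 + b/a)^(m+n)`. So as `a → ∞` with `b/a → t`
the ratio tends to `t^n / (1+t)^(m+n)`, which is nonzero and depends only on `t`; the
cross-ratio of two such ratios with the same `t` therefore tends to `1`.
-/

open Filter Topology Asymptotics
open scoped Nat

theorem Nat.choose_mul_descFactorial_mul_descFactorial {a b m n : ℕ} (hm : m ≤ a) (hn : n ≤ b) :
    (a + b).choose b * b.descFactorial n * a.descFactorial m =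
      (a + b - m - n).choose (b - n) * (a + b).descFactorial (m + n) := by
  refine Nat.eq_of_mul_eq_mul_right (Nat.mul_pos (b - n).factorial_pos (a - m).factorial_pos) ?_
  calc (a + b).choose b * b.descFactorial n * a.descFactorial m * ((b - n)! * (a - m)!)
      = (a + b).choose b * ((b - n)! * b.descFactorial n) * ((a - m)! * a.descFactorial m) := by
        ring
    _ = (a + b)! := by
        rw [factorial_mul_descFactorial hn, factorial_mul_descFactorial hm]
        simpa using choose_mul_factorial_mul_factorial (Nat.le_add_left b a)
    _ = (a + b - (m + n))! * (a + b).descFactorial (m + n) :=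
        (factorial_mul_descFactorial (by omega)).symm
    _ = (a + b - m - n).choose (b - n) * (a + b).descFactorial (m + n) * ((b - n)! * (a - m)!) := by
        rw [← Nat.sub_sub, ← choose_mul_factorial_mul_factorial (show b - n ≤ a + b - m - n by omega),
          show a + b - m - n - (b - n) = a - m by omega]
        ring

theorem Nat.cast_choose_sub_div_choose {a b m n : ℕ} (hm : m ≤ a) (hn : n ≤ b) :
    ((a + b - m - n).choose (b - n) : ℝ) / (a + b).choose b =
      b.descFactorial n * a.descFactorial m / (a + b).descFactorial (m + n) := by
  have hpos (k l : ℕ) (h : k ≤ l) : (0 : ℝ) < l.descFactorial k :=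
    Nat.cast_pos.mpr (Nat.descFactorial_pos.mpr h)
  rw [div_eq_div_iff (Nat.cast_pos.mpr (Nat.choose_pos (Nat.le_add_left b a))).ne'
    (hpos _ _ (by omega)).ne', mul_comm _ ((a + b).choose b : ℝ), ← mul_assoc]
  exact_mod_cast (Nat.choose_mul_descFactorial_mul_descFactorial hm hn).symm

theorem tendsto_cast_choose_sub_div_choose {α : Type*} {l : Filter α} (m n : ℕ) {a b : α → ℕ}
    {t : ℝ} (ht : 0 < t) (ha : Tendsto a l atTop)
    (hb : Tendsto (fun x => (b x : ℝ) / a x) l (𝓝 t)) :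
    Tendsto (fun x => ((a x + b x - m - n).choose (b x - n) : ℝ) / (a x + b x).choose (b x))
      l (𝓝 (t ^ n / (1 + t) ^ (m + n))) := by
  have haR : Tendsto (fun x => (a x : ℝ)) l atTop := tendsto_natCast_atTop_atTop.comp ha
  have ha0 : ∀ᶠ x in l, (a x : ℝ) ≠ 0 := haR.eventually_ne_atTop 0
  have hb' : Tendsto b l atTop := by
    refine tendsto_natCast_atTop_iff.mp ((hb.pos_mul_atTop ht haR).congr' ?_)
    filter_upwards [ha0] with x hx
    field_simp
  have hab : Tendsto (fun x => a x + b x) l atTop :=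
    tendsto_atTop_mono (fun x => Nat.le_add_right _ _) ha
  have hequiv : (fun x => ((a x + b x - m - n).choose (b x - n) : ℝ) / (a x + b x).choose (b x))
      ~[l] fun x => (b x : ℝ) ^ n * (a x : ℝ) ^ m / ((a x : ℝ) + b x) ^ (m + n) := by
    have hdesc (k : ℕ) {c : α → ℕ} (hc : Tendsto c l atTop) :
        (fun x => ((c x).descFactorial k : ℝ)) ~[l] fun x => (c x : ℝ) ^ k :=
      (isEquivalent_descFactorial k).comp_tendsto hc
    have key := ((hdesc n hb').mul (hdesc m ha)).div (hdesc (m + n) hab)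
    push_cast at key
    refine key.congr_left ?_
    filter_upwards [ha.eventually_ge_atTop m, hb'.eventually_ge_atTop n] with x hm hn
    exact (Nat.cast_choose_sub_div_choose hm hn).symm
  refine hequiv.tendsto_nhds_iff.mpr (((hb.pow n).div ((tendsto_const_nhds.add hb).pow (m + n))
    (by positivity)).congr' ?_)
  filter_upwards [ha0] with x hx
  rw [Pi.div_apply, one_add_div hx, div_pow, div_pow, pow_add (a x : ℝ)]
  field_simp

/-- Fix nonnegative integers `m` and `n`, and let `(a_N)`,
`(b_N)`, `(b̄_N)` be sequences of natural numbers with `a_N → ∞`,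
`b_N/a_N → t` and `b̄_N/a_N → t` for the same `t ∈ (0, ∞)`.  Then the
cross-ratio
`[C(a_N+b_N−m−n, b_N−n)/C(a_N+b_N, b_N)] · [C(a_N+b̄_N, b̄_N)/C(a_N+b̄_N−m−n, b̄_N−n)]`
converges to `1` as `N → ∞`. -/
theorem statement11 (m n : ℕ) (a b bbar : ℕ → ℕ) (t : ℝ) (ht : 0 < t)
    (ha : Tendsto a atTop atTop)
    (hb : Tendsto (fun N => (b N : ℝ) / (a N : ℝ)) atTop (nhds t))
    (hbbar : Tendsto (fun N => (bbar N : ℝ) / (a N : ℝ)) atTop (nhds t)) :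
    Tendsto
      (fun N =>
        (((a N + b N - m - n).choose (b N - n) : ℝ) /
          ((a N + b N).choose (b N) : ℝ)) *
        (((a N + bbar N).choose (bbar N) : ℝ) /
          ((a N + bbar N - m - n).choose (bbar N - n) : ℝ)))
      atTop (nhds 1) := by
  have hlim : t ^ n / (1 + t) ^ (m + n) ≠ 0 := by positivity
  have h := (tendsto_cast_choose_sub_div_choose m n ht ha hb).mul
    ((tendsto_cast_choose_sub_div_choose m n ht ha hbbar).inv₀ hlim)
  rw [mul_inv_cancel₀ hlim] at h
  simpa only [inv_div] using h
end
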